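/- arXiv:2405.16411 — 3 statements merged into one kernel-verified Lean document; each statement's English description precedes it below -/
import Mathlib

section
/- Distribution rule for ⊖, ⊘ and matrix product: for any U1 ∈ ℝ^{n1×d}, U2 ∈ ℝ^{n1×k}, V1 ∈ ℝ^{n2×d}, V2 ∈ ℝ^{n2×k}, W1 ∈ ℝ^{n3×d}, W2 ∈ ℝ^{n3×k}, it holds that (U1 ⊖ U2) · ((V1 ⊖ V2) ⊘ (W1 ⊖ W2))^⊤ = (U1 (V1 ⊘ W1)^⊤) ∘ (U2 (V2 ⊘ W2)^⊤) as matrices in ℝ^{n1 × n2 n3}. -/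
open Matrix

/-- Column-wise Kronecker product `⊘`: `(K1 ⊘ K2) (i1, i2) j = K1 i1 j * K2 i2 j`. -/
def colKron {α β γ : Type*} (K1 : Matrix α γ ℝ) (K2 : Matrix β γ ℝ) :
    Matrix (α × β) γ ℝ :=
  Matrix.of fun i j => K1 i.1 j * K2 i.2 j

/-- Row-wise Kronecker product `⊖`: `(K1 ⊖ K2) i (j1, j2) = K1 i j1 * K2 i j2`. -/
def rowKron {α γ δ : Type*} (K1 : Matrix α γ ℝ) (K2 : Matrix α δ ℝ) :
    Matrix α (γ × δ) ℝ :=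
  Matrix.of fun i j => K1 i j.1 * K2 i j.2

theorem colKron_rowKron_rowKron {α β γ δ : Type*} (A : Matrix α γ ℝ) (B : Matrix α δ ℝ)
    (C : Matrix β γ ℝ) (D : Matrix β δ ℝ) :
    colKron (rowKron A B) (rowKron C D) = rowKron (colKron A C) (colKron B D) := by
  ext i j
  simp only [colKron, rowKron, of_apply]
  ring

theorem rowKron_mul_transpose_rowKron {α β γ δ : Type*} [Fintype γ] [Fintype δ]
    (A : Matrix α γ ℝ) (B : Matrix α δ ℝ) (C : Matrix β γ ℝ) (D : Matrix β δ ℝ) :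
    rowKron A B * (rowKron C D)ᵀ = (A * Cᵀ).hadamard (B * Dᵀ) := by
  ext i j
  simp only [mul_apply, hadamard_apply, transpose_apply, rowKron, of_apply,
    Fintype.sum_prod_type, Finset.sum_mul_sum]
  exact Finset.sum_congr rfl fun _ _ => Finset.sum_congr rfl fun _ _ => by ring

/-- Distribution rule for `⊖`, `⊘` and matrix product:
`(U1 ⊖ U2) · ((V1 ⊖ V2) ⊘ (W1 ⊖ W2))ᵀ = (U1 (V1 ⊘ W1)ᵀ) ∘ (U2 (V2 ⊘ W2)ᵀ)`
in `ℝ^{n1 × n2 n3}`, where `∘` is the Hadamard product. -/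
theorem distribution_rule_ominus_oslash {n1 n2 n3 d k : ℕ}
    (U1 : Matrix (Fin n1) (Fin d) ℝ) (U2 : Matrix (Fin n1) (Fin k) ℝ)
    (V1 : Matrix (Fin n2) (Fin d) ℝ) (V2 : Matrix (Fin n2) (Fin k) ℝ)
    (W1 : Matrix (Fin n3) (Fin d) ℝ) (W2 : Matrix (Fin n3) (Fin k) ℝ) :
    rowKron U1 U2 * (colKron (rowKron V1 V2) (rowKron W1 W2))ᵀ =
      (U1 * (colKron V1 W1)ᵀ).hadamard (U2 * (colKron V2 W2)ᵀ) := by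
  rw [colKron_rowKron_rowKron, rowKron_mul_transpose_rowKron]
end

section
/- Derivative of the attention output entry: in the setting of the definitions below, for every i ∈ [d³], j0 ∈ [n], and i0 ∈ [d], the partial derivative of V(x)_{j0,i0} := ⟨F(x)_{j0}, H_{i0}⟩ − E_{j0,i0} with respect to x_i equals ⟨𝖠_{j0,i} ∘ F(x)_{j0}, H_{i0}⟩ − ⟨F(x)_{j0}, H_{i0}⟩ · ⟨𝖠_{j0,i}, F(x)_{j0}⟩. -/
open Matrix

/-- The sub-block `𝖠_{j0} ∈ ℝ^{n²×d³}` of the triple Kronecker product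
`𝖠 = A1 ⊗ A2 ⊗ A3 ∈ ℝ^{n³×d³}` consisting of the rows whose first (major) index is `j0`:
`(𝖠_{j0}) (i2, i3) (a, b, c) = A1 j0 a * A2 i2 b * A3 i3 c`. -/
def Ablock {n d : ℕ} (A1 A2 A3 : Matrix (Fin n) (Fin d) ℝ) (j0 : Fin n) :
    Matrix (Fin n × Fin n) (Fin d × Fin d × Fin d) ℝ :=
  Matrix.of fun p q => A1 j0 q.1 * A2 p.1 q.2.1 * A3 p.2 q.2.2

/-- `K(x)_{j0} := exp(𝖠_{j0} x) ∈ ℝ^{n²}` (entrywise exponential). -/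
noncomputable def Kfun {n d : ℕ} (A1 A2 A3 : Matrix (Fin n) (Fin d) ℝ)
    (x : Fin d × Fin d × Fin d → ℝ) (j0 : Fin n) : Fin n × Fin n → ℝ :=
  fun p => Real.exp ((Ablock A1 A2 A3 j0).mulVec x p)

/-- `α(x)_{j0} := ⟨exp(𝖠_{j0} x), 1_{n²}⟩`. -/
noncomputable def alphaFun {n d : ℕ} (A1 A2 A3 : Matrix (Fin n) (Fin d) ℝ)
    (x : Fin d × Fin d × Fin d → ℝ) (j0 : Fin n) : ℝ :=
  ∑ p, Kfun A1 A2 A3 x j0 p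

/-- `F(x)_{j0} := α(x)_{j0}⁻¹ K(x)_{j0} ∈ ℝ^{n²}`. -/
noncomputable def Ffun {n d : ℕ} (A1 A2 A3 : Matrix (Fin n) (Fin d) ℝ)
    (x : Fin d × Fin d × Fin d → ℝ) (j0 : Fin n) : Fin n × Fin n → ℝ :=
  fun p => (alphaFun A1 A2 A3 x j0)⁻¹ * Kfun A1 A2 A3 x j0 p

/-! `F(x)_{j0}` is the softmax of the logits `𝖠_{j0} x`, and each logit is affine in `x_i` with
slope the entry of the column `𝖠_{j0,i}`. The softmax Jacobian `∂σ_p = σ_p (u'_p − ⟨u', σ⟩)`,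
paired with `H_{i0}`, gives the formula. -/

open Finset

theorem hasDerivAt_mulVec_update_apply {𝕜 m ι : Type*} [NontriviallyNormedField 𝕜]
    [Fintype ι] [DecidableEq ι] (M : Matrix m ι 𝕜) (x : ι → 𝕜) (i : ι) (p : m) (t : 𝕜) :
    HasDerivAt (fun s => (M *ᵥ Function.update x i s) p) (M p i) t := by
  have hx := hasDerivAt_pi.1 (hasDerivAt_update x i t)
  have := HasDerivAt.fun_sum fun q (_ : q ∈ univ) => (hx q).const_mul (M p q)
  simpa [Matrix.mulVec, dotProduct, Pi.single_apply] using this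

section Softmax

variable {ι : Type*} [Fintype ι]

noncomputable def softmax (v : ι → ℝ) : ι → ℝ :=
  fun p => (∑ q, Real.exp (v q))⁻¹ * Real.exp (v p)

theorem hasDerivAt_softmax {u : ℝ → ι → ℝ} {u' : ι → ℝ} {t : ℝ}
    (hu : ∀ q, HasDerivAt (fun s => u s q) (u' q) t) (p : ι) :
    HasDerivAt (fun s => softmax (u s) p)
      (softmax (u t) p * (u' p - ∑ q, u' q * softmax (u t) q)) t := by
  have hS := HasDerivAt.fun_sum fun q (_ : q ∈ univ) => (hu q).exp
  have hS_ne : ∑ q, Real.exp (u t q) ≠ 0 :=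
    (Finset.sum_pos (fun _ _ => Real.exp_pos _) ⟨p, mem_univ p⟩).ne'
  refine ((hS.fun_inv hS_ne).fun_mul (hu p).exp).congr_deriv ?_
  have hmean : ∑ q, u' q * softmax (u t) q
      = (∑ q, Real.exp (u t q))⁻¹ * ∑ q, Real.exp (u t q) * u' q := by
    rw [Finset.mul_sum]
    exact Finset.sum_congr rfl fun q _ => by simp only [softmax]; ring
  rw [hmean]
  simp only [softmax]
  field_simp
  ring

theorem hasDerivAt_sum_softmax_mul {u : ℝ → ι → ℝ} {u' : ι → ℝ} {t : ℝ}
    (hu : ∀ q, HasDerivAt (fun s => u s q) (u' q) t) (h : ι → ℝ) :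
    HasDerivAt (fun s => ∑ p, softmax (u s) p * h p)
      ((∑ p, u' p * softmax (u t) p * h p)
        - (∑ p, softmax (u t) p * h p) * ∑ p, u' p * softmax (u t) p) t := by
  refine (HasDerivAt.fun_sum fun p (_ : p ∈ univ) =>
    (hasDerivAt_softmax hu p).mul_const (h p)).congr_deriv ?_
  rw [Finset.sum_mul, ← Finset.sum_sub_distrib]
  exact Finset.sum_congr rfl fun p _ => by ring

end Softmax

/-- Derivative of the attention output entry: the partial derivative of
`V(x)_{j0,i0} := ⟨F(x)_{j0}, H_{i0}⟩ − E_{j0,i0}` with respect to `x_i` equals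
`⟨𝖠_{j0,i} ∘ F(x)_{j0}, H_{i0}⟩ − ⟨F(x)_{j0}, H_{i0}⟩ · ⟨𝖠_{j0,i}, F(x)_{j0}⟩`. -/
theorem attention_entry_derivative {n d : ℕ} (A1 A2 A3 : Matrix (Fin n) (Fin d) ℝ)
    (H : Matrix (Fin n × Fin n) (Fin d) ℝ) (E : Matrix (Fin n) (Fin d) ℝ)
    (x : Fin d × Fin d × Fin d → ℝ) (i : Fin d × Fin d × Fin d) (j0 : Fin n) (i0 : Fin d) :
    HasDerivAt
      (fun t : ℝ =>
        (∑ p, Ffun A1 A2 A3 (Function.update x i t) j0 p * H p i0) - E j0 i0)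
      ((∑ p, (Ablock A1 A2 A3 j0 p i * Ffun A1 A2 A3 x j0 p) * H p i0)
        - (∑ p, Ffun A1 A2 A3 x j0 p * H p i0)
          * (∑ p, Ablock A1 A2 A3 j0 p i * Ffun A1 A2 A3 x j0 p))
      (x i) := by
  have hlogits := (hasDerivAt_mulVec_update_apply (Ablock A1 A2 A3 j0) x i · (x i))
  have := (hasDerivAt_sum_softmax_mul hlogits fun p => H p i0).sub_const (E j0 i0)
  rw [Function.update_eq_self] at this
  -- `Ffun A1 A2 A3 y j0` unfolds to `softmax (Ablock A1 A2 A3 j0 *ᵥ y)`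
  exact this
end

section
/- First derivative bound for the attention loss curve: let H ∈ ℝ^{n×n²} be a fixed matrix with all entries in the interval [1, B_a] and such that in each row at least half of the entries equal B_a, and let V ∈ ℝ^{n²×d} have all entries in {0,1}. For λ ∈ ℝ, let M_λ := exp(λH) ∈ ℝ^{n×n²} (entrywise exponential) and define f(λ) := ‖diag(M_λ 1_{n²})^{−1} M_λ V‖_F². Then f is differentiable on ℝ and for every λ ∈ ℝ, |f′(λ)| ≤ 8 · B_a · n · d. -/
/-!
Each entry of `diag(M_λ 1)⁻¹ M_λ V` is a softmax mean `g(λ) = E_p[v]` of a `{0,1}`-valued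
column `v` of `V` under the weights `p_j ∝ exp(λ h_j)` given by a row `h` of `H`. Its derivative
is the covariance `E_p[h v] - E_p[v] E_p[h]`, a difference of two numbers in `[0, B_a]`, so
`|(g²)'| = 2 |g| |Cov_p(h, v)| ≤ 2 B_a`. Summing over the `n d` entries gives `2 B_a n d`.
-/

open Matrix Real Set

theorem Matrix.inv_diagonal_mulVec_one_mul_apply {m k o K : Type*} [Fintype m] [DecidableEq m]
    [Fintype k] [Field K] (M : Matrix m k K) (V : Matrix k o K) (hM : ∀ i, ∑ j, M i j ≠ 0)
    (i : m) (l : o) :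
    ((diagonal (M *ᵥ 1))⁻¹ * M * V) i l = (M * V) i l / ∑ j, M i j := by
  have hrow : M *ᵥ 1 = fun i => ∑ j, M i j := by ext i; simp [mulVec, dotProduct]
  have hinv : (diagonal (M *ᵥ 1))⁻¹ = diagonal fun i => (∑ j, M i j)⁻¹ := by
    refine inv_eq_right_inv ?_
    rw [hrow, diagonal_mul_diagonal, ← diagonal_one]
    exact congrArg diagonal (funext fun i => mul_inv_cancel₀ (hM i))
  rw [hinv, Matrix.mul_assoc, diagonal_mul, inv_mul_eq_div]

section SoftmaxMean

variable {ι : Type*} [Fintype ι]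

noncomputable def softmaxMean (h v : ι → ℝ) (x : ℝ) : ℝ :=
  (∑ j, exp (x * h j) * v j) / ∑ j, exp (x * h j)

noncomputable def softmaxCov (h v : ι → ℝ) (x : ℝ) : ℝ :=
  softmaxMean h (h * v) x - softmaxMean h v x * softmaxMean h h x

lemma sum_exp_mul_pos [Nonempty ι] (h : ι → ℝ) (x : ℝ) : 0 < ∑ j, exp (x * h j) :=
  Finset.sum_pos (fun _ _ => exp_pos _) Finset.univ_nonempty

lemma softmaxMean_mem_Icc [Nonempty ι] {h v : ι → ℝ} {a b : ℝ} (hv : ∀ j, v j ∈ Icc a b)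
    (x : ℝ) : softmaxMean h v x ∈ Icc a b := by
  have hT := sum_exp_mul_pos h x
  refine ⟨(le_div_iff₀ hT).2 ?_, (div_le_iff₀ hT).2 ?_⟩ <;> rw [Finset.mul_sum] <;>
    refine Finset.sum_le_sum fun j _ => ?_
  · rw [mul_comm a]; exact mul_le_mul_of_nonneg_left (hv j).1 (exp_pos _).le
  · rw [mul_comm b]; exact mul_le_mul_of_nonneg_left (hv j).2 (exp_pos _).le

lemma hasDerivAt_sum_exp_mul (h v : ι → ℝ) (x : ℝ) :
    HasDerivAt (fun x => ∑ j, exp (x * h j) * v j) (∑ j, exp (x * h j) * (h j * v j)) x :=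
  HasDerivAt.fun_sum fun j _ => by
    simpa [mul_assoc] using ((hasDerivAt_mul_const (h j)).exp).mul_const (v j)

lemma hasDerivAt_softmaxMean [Nonempty ι] (h v : ι → ℝ) (x : ℝ) :
    HasDerivAt (softmaxMean h v) (softmaxCov h v x) x := by
  have hden : HasDerivAt (fun x => ∑ j, exp (x * h j)) (∑ j, exp (x * h j) * h j) x := by
    simpa using hasDerivAt_sum_exp_mul h 1 x
  refine ((hasDerivAt_sum_exp_mul h v x).fun_div hden (sum_exp_mul_pos h x).ne').congr_deriv ?_
  simp only [softmaxCov, softmaxMean, Pi.mul_apply]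
  field_simp

lemma hasDerivAt_softmaxMean_sq [Nonempty ι] (h v : ι → ℝ) (x : ℝ) :
    HasDerivAt (fun x => softmaxMean h v x ^ 2) (2 * softmaxMean h v x * softmaxCov h v x) x := by
  simpa using (hasDerivAt_softmaxMean h v x).fun_pow 2

lemma abs_softmaxCov_le [Nonempty ι] {h v : ι → ℝ} {B : ℝ} (hh : ∀ j, h j ∈ Icc 0 B)
    (hv : ∀ j, v j ∈ Icc 0 1) (x : ℝ) : |softmaxCov h v x| ≤ B := by
  have hhv : ∀ j, (h * v) j ∈ Icc 0 B := fun j =>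
    ⟨mul_nonneg (hh j).1 (hv j).1, (mul_le_of_le_one_right (hh j).1 (hv j).2).trans (hh j).2⟩
  obtain ⟨hEhv₀, hEhv₁⟩ := softmaxMean_mem_Icc hhv x
  obtain ⟨hEv₀, hEv₁⟩ := softmaxMean_mem_Icc hv x
  obtain ⟨hEh₀, hEh₁⟩ := softmaxMean_mem_Icc hh x
  exact abs_sub_le_of_nonneg_of_le hEhv₀ hEhv₁ (mul_nonneg hEv₀ hEh₀)
    ((mul_le_of_le_one_left hEh₀ hEv₁).trans hEh₁)

lemma abs_deriv_softmaxMean_sq_le [Nonempty ι] {h v : ι → ℝ} {B : ℝ}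
    (hh : ∀ j, h j ∈ Icc 0 B) (hv : ∀ j, v j ∈ Icc 0 1) (x : ℝ) :
    |2 * softmaxMean h v x * softmaxCov h v x| ≤ 2 * B := by
  obtain ⟨hg₀, hg₁⟩ := softmaxMean_mem_Icc hv x
  rw [abs_mul, abs_mul, abs_two, abs_of_nonneg hg₀, mul_assoc]
  gcongr
  exact (mul_le_of_le_one_left (abs_nonneg _) hg₁).trans (abs_softmaxCov_le hh hv x)

end SoftmaxMean

theorem attention_curve_first_derivative_bound_general {n d : ℕ} (Ba : ℝ) (hBa : 1 ≤ Ba)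
    (H : Matrix (Fin n) (Fin n × Fin n) ℝ)
    (hH : ∀ i j, 1 ≤ H i j ∧ H i j ≤ Ba)
    (V : Matrix (Fin n × Fin n) (Fin d) ℝ)
    (hV : ∀ i j, V i j = 0 ∨ V i j = 1)
    (f : ℝ → ℝ)
    (hf : f = fun lam : ℝ =>
      ∑ i, ∑ l,
        (((Matrix.diagonal
              ((Matrix.of fun i j => Real.exp (lam * H i j)).mulVec 1))⁻¹
            * (Matrix.of fun i j => Real.exp (lam * H i j)) * V) i l) ^ 2) :
    Differentiable ℝ f ∧ ∀ lam : ℝ, |deriv f lam| ≤ 8 * Ba * n * d := by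
  have hne (i : Fin n) : Nonempty (Fin n × Fin n) := ⟨(i, i)⟩
  have hH' (i : Fin n) j : H i j ∈ Icc 0 Ba := ⟨zero_le_one.trans (hH i j).1, (hH i j).2⟩
  have hV' (l : Fin d) j : V j l ∈ Icc 0 1 := by rcases hV j l with h | h <;> simp [h]
  have hfg : f = fun lam => ∑ i, ∑ l, softmaxMean (H i) (fun j => V j l) lam ^ 2 := by
    subst hf; funext lam
    simp only [inv_diagonal_mulVec_one_mul_apply (of fun i j => exp (lam * H i j)) V
      fun i => (@sum_exp_mul_pos _ _ (hne i) (H i) lam).ne']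
    rfl
  have hderiv (lam : ℝ) : HasDerivAt f (∑ i, ∑ l, 2 * softmaxMean (H i) (fun j => V j l) lam *
      softmaxCov (H i) (fun j => V j l) lam) lam :=
    hfg ▸ HasDerivAt.fun_sum fun i _ => HasDerivAt.fun_sum fun l _ =>
      @hasDerivAt_softmaxMean_sq _ _ (hne i) _ _ lam
  refine ⟨fun lam => (hderiv lam).differentiableAt, fun lam => ?_⟩
  rw [(hderiv lam).deriv]
  calc _ ≤ ∑ i, ∑ l, |2 * softmaxMean (H i) (fun j => V j l) lam *
          softmaxCov (H i) (fun j => V j l) lam| :=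
        (Finset.abs_sum_le_sum_abs _ _).trans
          (Finset.sum_le_sum fun i _ => Finset.abs_sum_le_sum_abs _ _)
    _ ≤ ∑ _i : Fin n, ∑ _l : Fin d, 2 * Ba := by
        gcongr with i _ l _
        exact @abs_deriv_softmaxMean_sq_le _ _ (hne i) _ _ _ (hH' i) (hV' l) lam
    _ = 2 * Ba * n * d := by
        simp only [Finset.sum_const, Finset.card_univ, Fintype.card_fin, nsmul_eq_mul]; ring
    _ ≤ 8 * Ba * n * d := by gcongr; norm_num

/-- First derivative bound for the attention loss curve: with `H ∈ ℝ^{n×n²}` having entries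
in `[1, B_a]` and at least half of each row equal to `B_a`, `V ∈ ℝ^{n²×d}` with `{0,1}`
entries, `M_λ := exp(λH)` entrywise, and `f(λ) := ‖diag(M_λ 1)⁻¹ M_λ V‖_F²`, the function
`f` is differentiable and `|f′(λ)| ≤ 8 B_a n d` for every `λ ∈ ℝ`. -/
theorem attention_curve_first_derivative_bound {n d : ℕ} (Ba : ℝ) (hBa : 1 ≤ Ba)
    (H : Matrix (Fin n) (Fin n × Fin n) ℝ)
    (hH : ∀ i j, 1 ≤ H i j ∧ H i j ≤ Ba)
    (hHalf : ∀ i : Fin n, n ^ 2 ≤ 2 * (Finset.univ.filter fun j => H i j = Ba).card)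
    (V : Matrix (Fin n × Fin n) (Fin d) ℝ)
    (hV : ∀ i j, V i j = 0 ∨ V i j = 1)
    (f : ℝ → ℝ)
    (hf : f = fun lam : ℝ =>
      ∑ i, ∑ l,
        (((Matrix.diagonal
              ((Matrix.of fun i j => Real.exp (lam * H i j)).mulVec 1))⁻¹
            * (Matrix.of fun i j => Real.exp (lam * H i j)) * V) i l) ^ 2) :
    Differentiable ℝ f ∧ ∀ lam : ℝ, |deriv f lam| ≤ 8 * Ba * n * d :=
  attention_curve_first_derivative_bound_general Ba hBa H hH V hV f hf
end
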